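/- arXiv:2212.12429 — 4 statements merged into one kernel-verified Lean document; each statement's English description precedes it below -/
import Mathlib

section
/- For all nonnegative integers n and real parameters α, β (with β, α+1 avoiding nonpositive integer degeneracies), the Hendriksen–van Rossum polynomial satisfies the inversion formula z^n · P_n(1/z; α, β) = ((β)_n / (α+1)_n) · P_n(z; β−1, α+1) as an identity of Laurent polynomials in z. -/
open Finset

noncomputable def poch (a : ℝ) (k : ℕ) : ℝ := ∏ i ∈ Finset.range k, (a + i)

noncomputable def HR (n : ℕ) (α β : ℝ) (z : ℝ) : ℝ :=
  (poch β n / poch (α + 1) n) *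
    ∑ k ∈ Finset.range (n + 1),
      (poch (-(n : ℝ)) k * poch (α + 1) k) / ((k.factorial : ℝ) * poch (1 - β - (n : ℝ)) k) * z ^ k

/-!
The coefficient of `z ^ k` in `P_n(z; α, β)` is `(-n)_k (α+1)_k / (k! (1-β-n)_k)`, and
`(-n)_k / k! = (-1)^k C(n, k)` is symmetric under `k ↦ n - k` up to sign. Multiplying
`P_n(1/z)` by `z ^ n` reverses the coefficients, so it remains to rewrite `(α+1)_{n-j}` and
`(1-β-n)_{n-j}` by splitting `(a)_n = (a)_{n-j} (a+n-j)_j` and reflecting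
`(a)_j = (-1)^j (1-a-j)_j`: this exchanges the roles of `α + 1` and `β`.
-/

lemma poch_eq_eval_ascPochhammer (a : ℝ) (k : ℕ) : poch a k = (ascPochhammer ℝ k).eval a := by
  induction k with
  | zero => simp [poch]
  | succ k ih => rw [poch, prod_range_succ, ← poch, ih, ascPochhammer_succ_eval]

lemma poch_ne_zero {a : ℝ} {k : ℕ} (h : ∀ i < k, a + (i : ℝ) ≠ 0) : poch a k ≠ 0 :=
  prod_ne_zero_iff.mpr fun i hi => h i (mem_range.mp hi)

lemma poch_add (a : ℝ) (m k : ℕ) : poch a (m + k) = poch a m * poch (a + m) k := by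
  simp only [poch, prod_range_add, Nat.cast_add, add_assoc]

lemma poch_reflect (a : ℝ) (k : ℕ) : poch a k = (-1) ^ k * poch (1 - a - k) k := by
  rw [poch_eq_eval_ascPochhammer, poch_eq_eval_ascPochhammer, ← neg_neg a,
    ascPochhammer_eval_neg_eq_descPochhammer, descPochhammer_eval_eq_ascPochhammer]
  ring_nf

lemma poch_neg_natCast (n k : ℕ) : poch (-n) k = (-1) ^ k * k.factorial * n.choose k := by
  rw [poch_eq_eval_ascPochhammer, ascPochhammer_eval_neg_eq_descPochhammer,
    descPochhammer_eval_eq_descFactorial, Nat.descFactorial_eq_factorial_mul_choose]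
  push_cast
  ring

lemma poch_eq_poch_sub_mul (a : ℝ) {n j : ℕ} (hj : j ≤ n) :
    poch a n = poch a (n - j) * ((-1) ^ j * poch (1 - a - n) j) := by
  conv_lhs => rw [← Nat.sub_add_cancel hj, poch_add, poch_reflect (a + _) j]
  congr 3
  push_cast [Nat.cast_sub hj]
  ring

lemma pow_mul_sum_range_inv_pow {K : Type*} [Field K] (f : ℕ → K) (n : ℕ) {z : K} (hz : z ≠ 0) :
    z ^ n * ∑ k ∈ range (n + 1), f k * z⁻¹ ^ k = ∑ j ∈ range (n + 1), f (n - j) * z ^ j := by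
  rw [← sum_range_reflect, mul_sum]
  refine sum_congr rfl fun j hj => ?_
  obtain ⟨m, rfl⟩ := Nat.exists_eq_add_of_le' (Nat.lt_succ_iff.mp (mem_range.mp hj))
  simp only [Nat.add_sub_cancel, inv_pow]
  field_simp
  ring

noncomputable def hrCoeff (n : ℕ) (α β : ℝ) (k : ℕ) : ℝ :=
  poch (-(n : ℝ)) k * poch (α + 1) k / ((k.factorial : ℝ) * poch (1 - β - (n : ℝ)) k)

lemma HR_eq_sum (n : ℕ) (α β z : ℝ) :
    HR n α β z = poch β n / poch (α + 1) n * ∑ k ∈ range (n + 1), hrCoeff n α β k * z ^ k :=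
  rfl

lemma hrCoeff_sub {n j : ℕ} {α β : ℝ} (hβ : poch β n ≠ 0) (hα : poch (α + 1) n ≠ 0) (hj : j ≤ n) :
    poch β n / poch (α + 1) n * hrCoeff n α β (n - j) = hrCoeff n (β - 1) (α + 1) j := by
  obtain ⟨m, rfl⟩ := Nat.exists_eq_add_of_le' hj
  have hαsplit := poch_eq_poch_sub_mul (α + 1) hj
  have hβsplit := poch_eq_poch_sub_mul (1 - β - ↑(m + j)) hj
  rw [show 1 - (1 - β - ↑(m + j)) - ↑(m + j) = β by ring] at hβsplit
  rw [Nat.add_sub_cancel] at hαsplit hβsplit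
  rw [hαsplit] at hα ⊢
  rw [poch_reflect β, hβsplit] at hβ ⊢
  simp only [ne_eq, mul_eq_zero, not_or] at hα hβ
  obtain ⟨hαm, -, hQ⟩ := hα
  obtain ⟨-, hBm, -, hβj⟩ := hβ
  simp only [hrCoeff, poch_neg_natCast, sub_add_cancel, Nat.add_sub_cancel, Nat.choose_symm_add]
  have hsign : (-1 : ℝ) ^ (m + j) * (-1) ^ m = (-1) ^ j := by
    rw [pow_add, mul_right_comm, ← pow_add, Even.neg_one_pow ⟨m, rfl⟩, one_mul]
  field_simp
  linear_combination ((m + j).choose j : ℝ) * hsign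

theorem hr_inversion_general (n : ℕ) (α β : ℝ)
    (hβ : ∀ j < n, β + (j : ℝ) ≠ 0)
    (hα : ∀ j < n, α + 1 + (j : ℝ) ≠ 0) :
    ∀ z : ℝ, z ≠ 0 →
      z ^ n * HR n α β (1 / z) =
        (poch β n / poch (α + 1) n) * HR n (β - 1) (α + 1) z := by
  intro z hz
  have hβn : poch β n ≠ 0 := poch_ne_zero hβ
  have hαn : poch (α + 1) n ≠ 0 := poch_ne_zero hα
  calc z ^ n * HR n α β (1 / z)
      = poch β n / poch (α + 1) n * ∑ j ∈ range (n + 1), hrCoeff n α β (n - j) * z ^ j := by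
        rw [HR_eq_sum, mul_left_comm, one_div, pow_mul_sum_range_inv_pow _ _ hz]
    _ = ∑ j ∈ range (n + 1), hrCoeff n (β - 1) (α + 1) j * z ^ j := by
        rw [mul_sum]
        refine sum_congr rfl fun j hj => ?_
        rw [← mul_assoc, hrCoeff_sub hβn hαn (Nat.lt_succ_iff.mp (mem_range.mp hj))]
    _ = poch β n / poch (α + 1) n * HR n (β - 1) (α + 1) z := by
        rw [HR_eq_sum, sub_add_cancel, ← mul_assoc, div_mul_div_cancel₀ hαn, div_self hβn, one_mul]

theorem hr_inversion (n : ℕ) (α β : ℝ)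
    (hβ : ∀ j < n, β + (j : ℝ) ≠ 0)
    (hα : ∀ j < n, α + 1 + (j : ℝ) ≠ 0)
    (hd : ∀ j < n, 1 - β - (n : ℝ) + (j : ℝ) ≠ 0) :
    ∀ z : ℝ, z ≠ 0 →
      z ^ n * HR n α β (1 / z) =
        (poch β n / poch (α + 1) n) * HR n (β - 1) (α + 1) z :=
  hr_inversion_general n α β hβ hα
end

section
/- The function φ(z) = (−z)^{−1+β}(1−z)^{−α−β} · P_n(1/z; −β, −α) satisfies the generalized eigenvalue equation L₁ φ = (−n−1) L₂ φ, where L₁ = z(1−z)∂_z² + (1−β−(2+α)z)∂_z and L₂ = (1−z)∂_z − (α+1)I. -/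
/-! On `z < 0` one has `(-z)^(β-1) (1/z)^k = (-1)^k (-z)^(β-1-k)`, so `φ` is a finite combination
`∑ c_k w_k` of the factors `w_k = (-z)^(β-1-k) (1-z)^(-(α+β))`. Each `w_k` has logarithmic
derivative `(β-1-k)/z - (α+β)/(z-1)`, and `L₁ + (n+1) L₂` sends it to
`k(n-k-α) w_k - (β-1-k)(n-k) w_{k+1}`. The ratio `c_{k+1}/c_k` of the hypergeometric coefficients
is exactly what makes these contributions telescope to zero. -/

open Finset

noncomputable def hypergeomCoeff (a b c : ℝ) (k : ℕ) : ℝ :=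
  poch a k * poch b k / ((k.factorial : ℝ) * poch c k)

lemma poch_succ (a : ℝ) (k : ℕ) : poch a (k + 1) = poch a k * (a + k) :=
  prod_range_succ _ _

lemma hypergeomCoeff_succ_mul (a b c : ℝ) (k : ℕ) (hc : poch c (k + 1) ≠ 0) :
    hypergeomCoeff a b c (k + 1) * ((k + 1) * (c + k)) =
      hypergeomCoeff a b c k * ((a + k) * (b + k)) := by
  rw [poch_succ, mul_ne_zero_iff] at hc
  obtain ⟨hc, hck⟩ := hc
  have hk : (k.factorial : ℝ) ≠ 0 := by positivity
  simp only [hypergeomCoeff, poch_succ, Nat.factorial_succ, Nat.cast_mul, Nat.cast_succ]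
  field_simp

lemma sum_range_succ_telescope (c A B G : ℕ → ℝ) (m : ℕ) (h0 : A 0 = 0)
    (hrec : ∀ k < m, c (k + 1) * A (k + 1) = c k * B k) :
    ∑ k ∈ range (m + 1), c k * (A k * G k - B k * G (k + 1)) = -(c m * B m * G (m + 1)) := by
  induction m with
  | zero => simp [h0, mul_assoc]
  | succ m ih =>
    rw [sum_range_succ, ih fun k hk => hrec k (by omega)]
    linear_combination G (m + 1) * hrec m (by omega)

lemma deriv_deriv_eq_of_eqOn {f g g' g'' : ℝ → ℝ} {s : Set ℝ} {x : ℝ} (hs : IsOpen s)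
    (hfg : Set.EqOn f g s) (hg : ∀ y ∈ s, HasDerivAt g (g' y) y)
    (hg' : ∀ y ∈ s, HasDerivAt g' (g'' y) y) (hx : x ∈ s) :
    deriv f x = g' x ∧ deriv (deriv f) x = g'' x := by
  have hderiv : Set.EqOn (deriv f) g' s := fun y hy =>
    ((hg y hy).congr_of_eventuallyEq (Filter.eventually_of_mem (hs.mem_nhds hy) hfg)).deriv
  exact ⟨hderiv hx, ((hg' x hx).congr_of_eventuallyEq
    (Filter.eventually_of_mem (hs.mem_nhds hx) hderiv)).deriv⟩

lemma neg_rpow_mul_one_div_pow {z : ℝ} (hz : z < 0) (s : ℝ) (k : ℕ) :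
    (-z) ^ s * (1 / z) ^ k = (-1) ^ k * (-z) ^ (s - k) := by
  have hz' : 0 < -z := neg_pos.mpr hz
  rw [Real.rpow_sub hz', Real.rpow_natCast, one_div, ← neg_neg z, inv_neg, neg_neg, neg_pow, inv_pow]
  field_simp

noncomputable def gaugeFactor (p q z : ℝ) : ℝ := (-z) ^ p * (1 - z) ^ q

lemma gaugeFactor_sub_one_left {z : ℝ} (hz : z < 0) (p q : ℝ) :
    gaugeFactor (p - 1) q z = gaugeFactor p q z / (-z) := by
  simp only [gaugeFactor, Real.rpow_sub_one (neg_pos.mpr hz).ne']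
  ring

lemma hasDerivAt_gaugeFactor {z : ℝ} (hz : z < 0) (p q : ℝ) :
    HasDerivAt (gaugeFactor p q) (gaugeFactor p q z * (p / z + q / (z - 1))) z := by
  have hz' : 0 < -z := neg_pos.mpr hz
  have h1z : 0 < 1 - z := by linarith
  have hleft := (Real.hasDerivAt_rpow_const (p := p) (Or.inl hz'.ne')).comp z (hasDerivAt_neg z)
  have hright := (Real.hasDerivAt_rpow_const (p := q) (Or.inl h1z.ne')).comp z
    ((hasDerivAt_id z).const_sub 1)
  refine (hleft.fun_mul hright).congr_deriv ?_
  have : z - 1 ≠ 0 := by linarith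
  simp only [Function.comp, gaugeFactor, Real.rpow_sub_one hz'.ne', Real.rpow_sub_one h1z.ne']
  field_simp
  ring

lemma hasDerivAt_gaugeFactor_mul_logDeriv {z : ℝ} (hz : z < 0) (p q : ℝ) :
    HasDerivAt (fun t => gaugeFactor p q t * (p / t + q / (t - 1)))
      (gaugeFactor p q z * ((p / z + q / (z - 1)) ^ 2 - p / z ^ 2 - q / (z - 1) ^ 2)) z := by
  have hz0 : z ≠ 0 := hz.ne
  have hz1 : z - 1 ≠ 0 := by linarith
  have hlog : HasDerivAt (fun t => p / t + q / (t - 1)) (-(p / z ^ 2) - q / (z - 1) ^ 2) z := by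
    have h := ((hasDerivAt_const z p).fun_div (hasDerivAt_id' z) hz0).fun_add
      ((hasDerivAt_const z q).fun_div ((hasDerivAt_id' z).sub_const 1) hz1)
    exact h.congr_deriv (by field_simp; ring)
  exact ((hasDerivAt_gaugeFactor hz p q).fun_mul hlog).congr_deriv (by ring)

lemma gaugeFactor_quasiEigen {z : ℝ} (hz : z < 0) (n k α β : ℝ) :
    let p := β - 1 - k
    let q := -(α + β)
    let r := p / z + q / (z - 1)
    z * (1 - z) * (gaugeFactor p q z * (r ^ 2 - p / z ^ 2 - q / (z - 1) ^ 2))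
        + (1 - β - (2 + α) * z) * (gaugeFactor p q z * r)
        - (-n - 1) * ((1 - z) * (gaugeFactor p q z * r) - (α + 1) * gaugeFactor p q z)
      = k * (n - k - α) * gaugeFactor p q z - (β - 1 - k) * (n - k) * gaugeFactor (p - 1) q z := by
  intro p q r
  have hz0 : z ≠ 0 := hz.ne
  have hz1 : z - 1 ≠ 0 := by linarith
  rw [gaugeFactor_sub_one_left hz]
  simp only [p, q, r]
  field_simp
  ring

noncomputable def hrGaugeCoeff (n : ℕ) (α β : ℝ) (k : ℕ) : ℝ :=
  poch (-α) n / poch (1 - β) n * ((-1) ^ k * hypergeomCoeff (-n) (1 - β) (1 + α - n) k)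

lemma neg_rpow_mul_one_sub_rpow_mul_HR_eq_sum {z : ℝ} (hz : z < 0) (n : ℕ) (α β : ℝ) :
    (-z) ^ (-1 + β) * (1 - z) ^ (-(α + β)) * HR n (-β) (-α) (1 / z)
      = ∑ k ∈ range (n + 1), hrGaugeCoeff n α β k * gaugeFactor (β - 1 - k) (-(α + β)) z := by
  simp only [HR, hrGaugeCoeff, hypergeomCoeff, gaugeFactor, mul_sum, neg_add_eq_sub,
    sub_neg_eq_add]
  refine sum_congr rfl fun k _ => ?_
  linear_combination (1 - z) ^ (-(α + β)) * poch (-α) n / poch (1 - β) n *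
    (poch (-n) k * poch (1 - β) k / (k.factorial * poch (1 + α - n) k)) *
    neg_rpow_mul_one_div_pow hz (β - 1) k

lemma hrGaugeCoeff_succ_mul {n : ℕ} {α : ℝ} (β : ℝ) (hd : ∀ j < n, 1 + α - (n : ℝ) + (j : ℝ) ≠ 0)
    {k : ℕ} (hk : k < n) :
    hrGaugeCoeff n α β (k + 1) * ((k + 1) * (n - (k + 1) - α))
      = hrGaugeCoeff n α β k * ((β - 1 - k) * (n - k)) := by
  have hpoch : poch (1 + α - n) (k + 1) ≠ 0 :=
    prod_ne_zero_iff.mpr fun j hj => hd j (by simp at hj; omega)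
  have hrec := hypergeomCoeff_succ_mul (-n) (1 - β) (1 + α - n) k hpoch
  simp only [hrGaugeCoeff, pow_succ]
  linear_combination poch (-α) n / poch (1 - β) n * (-1) ^ k * hrec

theorem hr_quasi_eigenfunction_type4_general (n : ℕ) (α β : ℝ)
    (hd : ∀ j < n, 1 + α - (n : ℝ) + (j : ℝ) ≠ 0) :
    ∀ z : ℝ, z < 0 →
      z * (1 - z) *
          deriv (deriv (fun t => (-t) ^ (-1 + β) * (1 - t) ^ (-(α + β)) * HR n (-β) (-α) (1 / t))) z
        + (1 - β - (2 + α) * z) *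
          deriv (fun t => (-t) ^ (-1 + β) * (1 - t) ^ (-(α + β)) * HR n (-β) (-α) (1 / t)) z
      = (-(n : ℝ) - 1) *
          ((1 - z) *
              deriv (fun t => (-t) ^ (-1 + β) * (1 - t) ^ (-(α + β)) * HR n (-β) (-α) (1 / t)) z
            - (α + 1) * ((-z) ^ (-1 + β) * (1 - z) ^ (-(α + β)) * HR n (-β) (-α) (1 / z))) := by
  intro z hz
  set c := hrGaugeCoeff n α β
  set g : ℕ → ℝ → ℝ := fun k => gaugeFactor (β - 1 - k) (-(α + β))
  obtain ⟨hφ', hφ''⟩ := deriv_deriv_eq_of_eqOn isOpen_Iio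
    (fun t ht => neg_rpow_mul_one_sub_rpow_mul_HR_eq_sum ht n α β)
    (fun t ht => HasDerivAt.fun_sum fun k _ =>
      (hasDerivAt_gaugeFactor ht (β - 1 - k) (-(α + β))).const_mul (c k))
    (fun t ht => HasDerivAt.fun_sum fun k _ =>
      (hasDerivAt_gaugeFactor_mul_logDeriv ht (β - 1 - k) (-(α + β))).const_mul (c k)) hz
  have htelescope := sum_range_succ_telescope c (fun k => k * (n - k - α))
    (fun k => (β - 1 - k) * (n - k)) (fun k => g k z) n (by simp)
    fun k hk => by simpa using hrGaugeCoeff_succ_mul β hd hk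
  rw [hφ', hφ'', neg_rpow_mul_one_sub_rpow_mul_HR_eq_sum hz, ← sub_eq_zero]
  simp only [sub_self, mul_zero, zero_mul, neg_zero] at htelescope
  rw [← htelescope]
  simp only [mul_sum, ← sum_add_distrib, ← sum_sub_distrib]
  refine sum_congr rfl fun k _ => ?_
  have hterm := gaugeFactor_quasiEigen hz n k α β
  simp only [g, Nat.cast_succ, ← sub_sub]
  linear_combination c k * hterm

theorem hr_quasi_eigenfunction_type4 (n : ℕ) (α β : ℝ)
    (hβ : ∀ j < n, -α + (j : ℝ) ≠ 0)
    (hα : ∀ j < n, -β + 1 + (j : ℝ) ≠ 0)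
    (hd : ∀ j < n, 1 + α - (n : ℝ) + (j : ℝ) ≠ 0) :
    ∀ z : ℝ, z < 0 →
      z * (1 - z) *
          deriv (deriv (fun t => (-t) ^ (-1 + β) * (1 - t) ^ (-(α + β)) * HR n (-β) (-α) (1 / t))) z
        + (1 - β - (2 + α) * z) *
          deriv (fun t => (-t) ^ (-1 + β) * (1 - t) ^ (-(α + β)) * HR n (-β) (-α) (1 / t)) z
      = (-(n : ℝ) - 1) *
          ((1 - z) *
              deriv (fun t => (-t) ^ (-1 + β) * (1 - t) ^ (-(α + β)) * HR n (-β) (-α) (1 / t)) z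
            - (α + 1) * ((-z) ^ (-1 + β) * (1 - z) ^ (-(α + β)) * HR n (-β) (-α) (1 / z))) :=
  hr_quasi_eigenfunction_type4_general n α β hd
end

section
/- Let L₁, L₂ be second-order differential operators, φ smooth and nonvanishing with L₁φ = κL₂φ, and suppose L₂φ/φ is nonvanishing. With F = (φ/ε)∂_z(1/φ), G_j = (1/(φ̃_j φ))(A_j∂_z + B_j)(φε) where φ̃_j = L_jφ/φ (j=1,2): if (L₁ − λL₂)ψ = 0, then (κG₁ − λG₂)(Fψ) = (λ − κ)ψ. -/
noncomputable def Fop (φ ε : ℝ → ℝ) (ψ : ℝ → ℝ) : ℝ → ℝ :=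
  fun z => φ z / ε z * deriv (fun t => ψ t / φ t) z

noncomputable def Lop (A B C : ℝ → ℝ) (ψ : ℝ → ℝ) : ℝ → ℝ :=
  fun z => A z * deriv (deriv ψ) z + B z * deriv ψ z + C z * ψ z

noncomputable def Gop2 (A B φt φ ε : ℝ → ℝ) (χ : ℝ → ℝ) : ℝ → ℝ :=
  fun z => (1 / (φt z * φ z)) *
    (A z * deriv (fun t => φ t * ε t * χ t) z + B z * (φ z * ε z * χ z))

theorem gevp_backward_relation (A1 B1 C1 A2 B2 C2 ε φ ψ : ℝ → ℝ) (κ lam : ℝ)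
    (hA1 : ContDiff ℝ (⊤ : ℕ∞) A1) (hB1 : ContDiff ℝ (⊤ : ℕ∞) B1) (hC1 : ContDiff ℝ (⊤ : ℕ∞) C1)
    (hA2 : ContDiff ℝ (⊤ : ℕ∞) A2) (hB2 : ContDiff ℝ (⊤ : ℕ∞) B2) (hC2 : ContDiff ℝ (⊤ : ℕ∞) C2)
    (hε : ContDiff ℝ (⊤ : ℕ∞) ε) (hφ : ContDiff ℝ (⊤ : ℕ∞) φ) (hψ : ContDiff ℝ (⊤ : ℕ∞) ψ)
    (hεne : ∀ z, ε z ≠ 0) (hφne : ∀ z, φ z ≠ 0)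
    (hφt1 : ∀ z, Lop A1 B1 C1 φ z / φ z ≠ 0)
    (hφt2 : ∀ z, Lop A2 B2 C2 φ z / φ z ≠ 0)
    (hφeig : ∀ z, Lop A1 B1 C1 φ z = κ * Lop A2 B2 C2 φ z)
    (hψeig : ∀ z, Lop A1 B1 C1 ψ z = lam * Lop A2 B2 C2 ψ z) :
    ∀ z : ℝ,
      κ * Gop2 A1 B1 (fun t => Lop A1 B1 C1 φ t / φ t) φ ε (Fop φ ε ψ) z
        - lam * Gop2 A2 B2 (fun t => Lop A2 B2 C2 φ t / φ t) φ ε (Fop φ ε ψ) z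
      = (lam - κ) * ψ z := by
  intro z
  have hφd : Differentiable ℝ φ := hφ.differentiable (by simp)
  have hψd : Differentiable ℝ ψ := hψ.differentiable (by simp)
  have hφ' : Differentiable ℝ (deriv φ) :=
    ((contDiff_infty_iff_deriv.mp (hφ.of_le (by simp))).2).differentiable (by simp)
  have hψ' : Differentiable ℝ (deriv ψ) :=
    ((contDiff_infty_iff_deriv.mp (hψ.of_le (by simp))).2).differentiable (by simp)
  -- The inner function equals the Wronskian
  have hW : (fun t => φ t * ε t * Fop φ ε ψ t)
      = fun t => deriv ψ t * φ t - ψ t * deriv φ t := by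
    funext t
    have hd : deriv (fun s => ψ s / φ s) t
        = (deriv ψ t * φ t - ψ t * deriv φ t) / (φ t)^2 :=
      deriv_div (hψd t) (hφd t) (hφne t)
    have h2 : φ t * ε t * Fop φ ε ψ t = (φ t)^2 * deriv (fun s => ψ s / φ s) t := by
      simp only [Fop]
      set D := deriv (fun s => ψ s / φ s) t with hD
      calc φ t * ε t * (φ t / ε t * D)
          = φ t * (ε t * (φ t * D / ε t)) := by ring
        _ = φ t * (φ t * D) := by rw [mul_div_cancel₀ _ (hεne t)]
        _ = (φ t)^2 * D := by ring
    rw [h2, hd, mul_comm, div_mul_cancel₀ _ (pow_ne_zero 2 (hφne t))]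
  have hWderiv : deriv (fun t => deriv ψ t * φ t - ψ t * deriv φ t) z
      = deriv (deriv ψ) z * φ z - ψ z * deriv (deriv φ) z := by
    have h1 : DifferentiableAt ℝ (fun t => deriv ψ t * φ t) z :=
      (hψ' z).mul (hφd z)
    have h2 : DifferentiableAt ℝ (fun t => ψ t * deriv φ t) z :=
      (hψd z).mul (hφ' z)
    rw [deriv_fun_sub h1 h2,
      deriv_fun_mul (hψ' z) (hφd z),
      deriv_fun_mul (hψd z) (hφ' z)]
    ring
  have hL1 : Lop A1 B1 C1 φ z ≠ 0 := fun h => hφt1 z (by rw [h]; simp)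
  have hL2 : Lop A2 B2 C2 φ z ≠ 0 := fun h => hφt2 z (by rw [h]; simp)
  have hWz : φ z * ε z * Fop φ ε ψ z = deriv ψ z * φ z - ψ z * deriv φ z :=
    congrFun hW z
  have key : ∀ A B C : ℝ → ℝ,
      A z * deriv (fun t => φ t * ε t * Fop φ ε ψ t) z
        + B z * (φ z * ε z * Fop φ ε ψ z)
      = φ z * Lop A B C ψ z - ψ z * Lop A B C φ z := by
    intro A B C
    rw [hW, hWderiv, hWz]
    simp only [Lop]
    ring
  simp only [Gop2]
  rw [key A1 B1 C1, key A2 B2 C2]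
  rw [div_mul_cancel₀ _ (hφne z), div_mul_cancel₀ _ (hφne z)]
  rw [hφeig z, hψeig z] at *
  have hκp : κ * Lop A2 B2 C2 φ z ≠ 0 := hL1
  have hκ : κ ≠ 0 := left_ne_zero_of_mul hκp
  field_simp
  ring
end

section
/- Under the hypotheses of the generalized Darboux transformation (L₁φ = κL₂φ, φ and φ̃_j = L_jφ/φ nonvanishing), any solution ψ of (L₁ − λL₂)ψ = 0 gives rise to a solution ψ̂ = Fψ of the transformed generalized eigenvalue problem F(κG₁ − λG₂)ψ̂ = (λ − κ)ψ̂; equivalently (L̂₁ − λL̂₂)ψ̂ = 0, where L̂₁ = κ(F∘G₁ + I) and L̂₂ = F∘G₂ + I. -/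
lemma gop2_eval (A B C ε φ ψ : ℝ → ℝ)
    (hφ : ContDiff ℝ (⊤ : ℕ∞) φ) (hψ : ContDiff ℝ (⊤ : ℕ∞) ψ)
    (hεne : ∀ z, ε z ≠ 0) (hφne : ∀ z, φ z ≠ 0)
    (z : ℝ) (hL : Lop A B C φ z ≠ 0) :
    Gop2 A B (fun s => Lop A B C φ s / φ s) φ ε (Fop φ ε ψ) z
      = φ z * Lop A B C ψ z / Lop A B C φ z - ψ z := by
  have hψd := hψ.differentiable (by simp)
  have hφd := hφ.differentiable (by simp)
  have hψ' : Differentiable ℝ (deriv ψ) :=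
    (contDiff_infty_iff_deriv.mp (hψ.of_le (by simp))).2.differentiable (by norm_num)
  have hφ' : Differentiable ℝ (deriv φ) :=
    (contDiff_infty_iff_deriv.mp (hφ.of_le (by simp))).2.differentiable (by norm_num)
  have hprod : (fun t => φ t * ε t * Fop φ ε ψ t)
      = fun t => φ t * deriv ψ t - ψ t * deriv φ t := by
    funext t
    have hd : deriv (fun s => ψ s / φ s) t
        = (deriv ψ t * φ t - ψ t * deriv φ t) / (φ t)^2 :=
      deriv_div (hψd t) (hφd t) (hφne t)
    simp only [Fop, hd]
    field_simp [hεne t, hφne t]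
  have hderiv : deriv (fun t => φ t * ε t * Fop φ ε ψ t) z
      = φ z * deriv (deriv ψ) z - ψ z * deriv (deriv φ) z := by
    rw [hprod]
    rw [deriv_fun_sub (show DifferentiableAt ℝ (fun t => φ t * deriv ψ t) z from (hφd z).mul (hψ' z))
      (show DifferentiableAt ℝ (fun t => ψ t * deriv φ t) z from (hψd z).mul (hφ' z)),
      deriv_fun_mul (hφd z) (hψ' z),
      deriv_fun_mul (hψd z) (hφ' z)]
    ring
  have hval : φ z * ε z * Fop φ ε ψ z = φ z * deriv ψ z - ψ z * deriv φ z :=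
    congrFun hprod z
  simp only [Gop2, hderiv, hval]
  have hφt : Lop A B C φ z / φ z * φ z = Lop A B C φ z :=
    div_mul_cancel₀ _ (hφne z)
  rw [hφt]
  simp only [Lop] at hL ⊢
  field_simp
  ring

theorem gevp_darboux_transformed (A1 B1 C1 A2 B2 C2 ε φ ψ : ℝ → ℝ) (κ lam : ℝ)
    (hA1 : ContDiff ℝ (⊤ : ℕ∞) A1) (hB1 : ContDiff ℝ (⊤ : ℕ∞) B1) (hC1 : ContDiff ℝ (⊤ : ℕ∞) C1)
    (hA2 : ContDiff ℝ (⊤ : ℕ∞) A2) (hB2 : ContDiff ℝ (⊤ : ℕ∞) B2) (hC2 : ContDiff ℝ (⊤ : ℕ∞) C2)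
    (hε : ContDiff ℝ (⊤ : ℕ∞) ε) (hφ : ContDiff ℝ (⊤ : ℕ∞) φ) (hψ : ContDiff ℝ (⊤ : ℕ∞) ψ)
    (hεne : ∀ z, ε z ≠ 0) (hφne : ∀ z, φ z ≠ 0)
    (hφt1 : ∀ z, Lop A1 B1 C1 φ z / φ z ≠ 0)
    (hφt2 : ∀ z, Lop A2 B2 C2 φ z / φ z ≠ 0)
    (hφeig : ∀ z, Lop A1 B1 C1 φ z = κ * Lop A2 B2 C2 φ z)
    (hψeig : ∀ z, Lop A1 B1 C1 ψ z = lam * Lop A2 B2 C2 ψ z) :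
    ∀ z : ℝ,
      Fop φ ε
        (fun t =>
          κ * Gop2 A1 B1 (fun s => Lop A1 B1 C1 φ s / φ s) φ ε (Fop φ ε ψ) t
            - lam * Gop2 A2 B2 (fun s => Lop A2 B2 C2 φ s / φ s) φ ε (Fop φ ε ψ) t) z
      = (lam - κ) * Fop φ ε ψ z := by
  intro z
  have hL1 : ∀ t, Lop A1 B1 C1 φ t ≠ 0 := by
    intro t h; exact hφt1 t (by rw [h]; simp)
  have hL2 : ∀ t, Lop A2 B2 C2 φ t ≠ 0 := by
    intro t h; exact hφt2 t (by rw [h]; simp)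
  have hκ : κ ≠ 0 := by
    intro h
    exact hL1 0 (by rw [hφeig 0, h, zero_mul])
  have hFun : (fun t =>
      κ * Gop2 A1 B1 (fun s => Lop A1 B1 C1 φ s / φ s) φ ε (Fop φ ε ψ) t
        - lam * Gop2 A2 B2 (fun s => Lop A2 B2 C2 φ s / φ s) φ ε (Fop φ ε ψ) t)
      = fun t => (lam - κ) * ψ t := by
    funext t
    rw [gop2_eval A1 B1 C1 ε φ ψ hφ hψ hεne hφne t (hL1 t),
      gop2_eval A2 B2 C2 ε φ ψ hφ hψ hεne hφne t (hL2 t),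
      hψeig t, hφeig t]
    field_simp [hκ, hL2 t]
    ring
  rw [hFun]
  simp only [Fop]
  have heq : (fun t => (lam - κ) * ψ t / φ t) = fun t => (lam - κ) * (ψ t / φ t) := by
    funext t; ring
  rw [heq, deriv_const_mul _ (show DifferentiableAt ℝ (fun t => ψ t / φ t) z from (hψ.differentiable (by simp) z).div
    (hφ.differentiable (by simp) z) (hφne z))]
  ring
end
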